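/- Let f be a conjugation-invariant functional on TL_{1,2} with values in an R-module M, and let z ∈ R be such that f(tσ_1) = z·f(t). Then f(t_1σ_1) = ((u² − 1 + u⁻²)·z + (u − u⁻¹))·f(t). -/

import Mathlib

/- Common setup: the mixed braid group `B_{1,n}`, the generalized Hecke algebra
of type B `H_{1,n}(u)`, and the generalized Temperley–Lieb algebra of type B
`TL_{1,n}`, following the paper's presentations. The generator `none` is `t`
and `some i` is `σ_{i+1}` for `i : Fin (n-1)`. -/

/-- Generators of the mixed braid group `B_{1,n}`: `none` is `t`,
`some i` is `σ_{i+1}`. -/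
abbrev B1Gen (n : ℕ) := Option (Fin (n - 1))

/-- The generator `t` in the free group. -/
def tF (n : ℕ) : FreeGroup (B1Gen n) := FreeGroup.of none

/-- The generator `σ_{i+1}` in the free group. -/
def sF (n : ℕ) (i : Fin (n - 1)) : FreeGroup (B1Gen n) := FreeGroup.of (some i)

/-- The relators of the mixed braid group `B_{1,n}`:
`σ₁tσ₁t = tσ₁tσ₁`; `tσ_i = σ_it` for `i > 1`; the braid relations
`σ_iσ_{i+1}σ_i = σ_{i+1}σ_iσ_{i+1}`; and `σ_iσ_j = σ_jσ_i` for `|i−j| > 1`. -/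
def mixedRels (n : ℕ) : Set (FreeGroup (B1Gen n)) :=
  { r | (∃ i : Fin (n - 1), (i : ℕ) = 0 ∧
          r = sF n i * tF n * sF n i * tF n * (tF n * sF n i * tF n * sF n i)⁻¹) ∨
        (∃ i : Fin (n - 1), 0 < (i : ℕ) ∧
          r = tF n * sF n i * (sF n i * tF n)⁻¹) ∨
        (∃ i j : Fin (n - 1), (j : ℕ) = (i : ℕ) + 1 ∧
          r = sF n i * sF n j * sF n i * (sF n j * sF n i * sF n j)⁻¹) ∨
        (∃ i j : Fin (n - 1), (i : ℕ) + 1 < (j : ℕ) ∧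
          r = sF n i * sF n j * (sF n j * sF n i)⁻¹) }

/-- The mixed braid group `B_{1,n}`. -/
abbrev MixedBraidGroup (n : ℕ) := PresentedGroup (mixedRels n)

/-- The generator `t` of `B_{1,n}`. -/
def tB (n : ℕ) : MixedBraidGroup n := PresentedGroup.of none

/-- The generator `σ_{i+1}` of `B_{1,n}`. -/
def sB (n : ℕ) (i : Fin (n - 1)) : MixedBraidGroup n := PresentedGroup.of (some i)

variable (R : Type) [CommRing R] (u : Rˣ)

/-- The quadratic Hecke relations `σ_i² = (u − u⁻¹)σ_i + 1` in the group
algebra `R[B_{1,n}]`. -/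
inductive heckeRel (n : ℕ) :
    MonoidAlgebra R (MixedBraidGroup n) → MonoidAlgebra R (MixedBraidGroup n) → Prop where
  | quad (i : Fin (n - 1)) :
      heckeRel n
        (MonoidAlgebra.of R (MixedBraidGroup n) (sB n i) *
          MonoidAlgebra.of R (MixedBraidGroup n) (sB n i))
        (((u : R) - ((u⁻¹ : Rˣ) : R)) • MonoidAlgebra.of R (MixedBraidGroup n) (sB n i) + 1)

/-- The generalized Hecke algebra of type B, `H_{1,n}(u)`. -/
abbrev Hecke (n : ℕ) := RingQuot (heckeRel R u n)

/-- The canonical (multiplicative) map `B_{1,n} → H_{1,n}(u)`. -/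
noncomputable def toHecke (n : ℕ) : MixedBraidGroup n →* Hecke R u n :=
  (RingQuot.mkRingHom (heckeRel R u n)).toMonoidHom.comp
    (MonoidAlgebra.of R (MixedBraidGroup n))

/-- The Temperley–Lieb relations: the generators
`1 + u(σ_i + σ_{i+1}) + u²(σ_iσ_{i+1} + σ_{i+1}σ_i) + u³σ_iσ_{i+1}σ_i`
of the defining ideal are set to `0`. -/
inductive tlRel (n : ℕ) : Hecke R u n → Hecke R u n → Prop where
  | cubic (i j : Fin (n - 1)) (hij : (j : ℕ) = (i : ℕ) + 1) :
      tlRel n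
        (1 + (u : R) • (toHecke R u n (sB n i) + toHecke R u n (sB n j))
          + ((u : R) ^ 2) • (toHecke R u n (sB n i) * toHecke R u n (sB n j)
              + toHecke R u n (sB n j) * toHecke R u n (sB n i))
          + ((u : R) ^ 3) •
              (toHecke R u n (sB n i) * toHecke R u n (sB n j) * toHecke R u n (sB n i)))
        0

/-- The generalized Temperley–Lieb algebra of type B, `TL_{1,n}`. -/
abbrev TL (n : ℕ) := RingQuot (tlRel R u n)

/-- The canonical (multiplicative) map `B_{1,n} → TL_{1,n}`. -/
noncomputable def toTL (n : ℕ) : MixedBraidGroup n →* TL R u n :=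
  (RingQuot.mkRingHom (tlRel R u n)).toMonoidHom.comp (toHecke R u n)

/-- The element `t` of `TL_{1,n}`. -/
noncomputable def tT (n : ℕ) : TL R u n := toTL R u n (tB n)

/-- The element `σ₁` of `TL_{1,n}` (needs `2 ≤ n`). -/
noncomputable def σ₁T (n : ℕ) (hn : 2 ≤ n) : TL R u n :=
  toTL R u n (sB n ⟨0, by omega⟩)

/-- The element `σ₁⁻¹` of `TL_{1,n}`, the image of the inverse braid
generator (needs `2 ≤ n`). -/
noncomputable def σ₁invT (n : ℕ) (hn : 2 ≤ n) : TL R u n :=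
  toTL R u n (sB n ⟨0, by omega⟩)⁻¹

/-- The looping element `t₁ = σ₁ t σ₁` of `TL_{1,n}` (needs `2 ≤ n`). -/
noncomputable def t₁T (n : ℕ) (hn : 2 ≤ n) : TL R u n :=
  toTL R u n (sB n ⟨0, by omega⟩ * tB n * sB n ⟨0, by omega⟩)

/- The quadratic relation `σ₁² = (u − u⁻¹)σ₁ + 1` removes both extra copies of `σ₁` from
`t₁σ₁ = σ₁tσ₁σ₁`: cycling the leading `σ₁` to the back and reducing `σ₁²` twice leaves only
`f(t)` and `f(tσ₁) = z f(t)`. The resulting scalar `(u − u⁻¹)((u − u⁻¹)z + 1) + z` is the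
claimed one because `u u⁻¹ = 1`. -/

section TraceOfQuadraticElement

variable {S A M : Type*} [CommSemiring S] [Semiring A] [Algebra S A] [AddCommMonoid M]
  [Module S M] (f : A →ₗ[S] M) {σ t : A} {c z : S}

theorem trace_conj_of_sq_eq (hf : ∀ a b : A, f (a * b) = f (b * a))
    (hσ : σ * σ = c • σ + 1) (hz : f (t * σ) = z • f t) :
    f (σ * t * σ) = (c * z + 1) • f t := by
  rw [hf (σ * t) σ, ← mul_assoc, hσ, add_mul, one_mul, smul_mul_assoc, map_add, map_smul,
    hf, hz, smul_smul, add_smul, one_smul]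

theorem trace_conj_mul_of_sq_eq (hf : ∀ a b : A, f (a * b) = f (b * a))
    (hσ : σ * σ = c • σ + 1) (hz : f (t * σ) = z • f t) :
    f (σ * t * σ * σ) = (c * (c * z + 1) + z) • f t := by
  rw [mul_assoc (σ * t), hσ, mul_add, mul_one, mul_smul_comm, map_add, map_smul,
    trace_conj_of_sq_eq f hf hσ hz, hf σ, hz, smul_smul, add_smul]

end TraceOfQuadraticElement

theorem toTL_eq_mkAlgHom (n : ℕ) (g : MixedBraidGroup n) :
    toTL R u n g = RingQuot.mkAlgHom R (tlRel R u n)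
      (RingQuot.mkAlgHom R (heckeRel R u n) (MonoidAlgebra.of R _ g)) := by
  simp only [toTL, toHecke, ← RingQuot.mkAlgHom_coe R, MonoidHom.comp_apply]
  rfl

theorem toTL_sB_mul_self (n : ℕ) (i : Fin (n - 1)) :
    toTL R u n (sB n i) * toTL R u n (sB n i)
      = ((u : R) - ((u⁻¹ : Rˣ) : R)) • toTL R u n (sB n i) + 1 := by
  have h := congrArg (RingQuot.mkAlgHom R (tlRel R u n))
    (RingQuot.mkAlgHom_rel R (heckeRel.quad (u := u) i))
  simpa only [map_mul, map_add, map_smul, map_one, ← toTL_eq_mkAlgHom] using h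

theorem σ₁T_mul_self (n : ℕ) (hn : 2 ≤ n) :
    σ₁T R u n hn * σ₁T R u n hn = ((u : R) - ((u⁻¹ : Rˣ) : R)) • σ₁T R u n hn + 1 :=
  toTL_sB_mul_self R u n _

theorem t₁T_eq (n : ℕ) (hn : 2 ≤ n) :
    t₁T R u n hn = σ₁T R u n hn * tT R u n * σ₁T R u n hn := by
  simp only [t₁T, σ₁T, tT, map_mul]

/-- The evaluation of `tr(t₁σ₁)` in the proof of Theorem 8 (mthm) of the paper:
if `f(tσ₁) = z·f(t)` then `f(t₁σ₁) = ((u² − 1 + u⁻²)z + (u − u⁻¹))·f(t)`. -/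
theorem trace_of_t1_sigma1 (M : Type) [AddCommGroup M] [Module R M]
    (z : R) (f : TL R u 2 →ₗ[R] M) (hf : ∀ a b : TL R u 2, f (a * b) = f (b * a))
    (hz : f (tT R u 2 * σ₁T R u 2 le_rfl) = z • f (tT R u 2)) :
    f (t₁T R u 2 le_rfl * σ₁T R u 2 le_rfl)
      = (((u : R) ^ 2 - 1 + ((u⁻¹ : Rˣ) : R) ^ 2) * z + ((u : R) - ((u⁻¹ : Rˣ) : R))) •
          f (tT R u 2) := by
  rw [t₁T_eq, trace_conj_mul_of_sq_eq f hf (σ₁T_mul_self R u 2 le_rfl) hz]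
  congr 1
  linear_combination (-2 * z) * u.mul_inv
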